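/- arXiv:2308.10688 — 6 statements merged into one kernel-verified Lean document; each statement's English description precedes it below -/
import Mathlib

section
/- Let a, b be complex numbers with |a||b| ≠ 1 and such that the lines L(a, 1/b̄) and L(b, 1/ā) are non-parallel. Then their intersection point equals (a(1-|b|²) + b(1-|a|²))/(1 - |a|²|b|²). -/
open ComplexConjugate

/-- The Euclidean line through two points of the complex plane,
viewed as a real affine subspace. -/
def lineThrough (x y : ℂ) : Set ℂ := ↑(affineSpan ℝ ({x, y} : Set ℂ))

lemma lineMap_mem_lineThrough (x y : ℂ) (t : ℝ) : AffineMap.lineMap x y t ∈ lineThrough x y :=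
  AffineMap.lineMap_mem_affineSpan_pair t x y

lemma sq_norm_div_conj (z : ℂ) : ((‖z‖ : ℝ) : ℂ) ^ 2 / conj z = z := by
  rcases eq_or_ne z 0 with rfl | hz
  · simp
  · rw [← Complex.mul_conj', mul_div_assoc, div_self ((map_ne_zero conj).mpr hz), mul_one]

noncomputable def intersectionPoint (a b : ℂ) : ℂ :=
  (a * (1 - ((‖b‖ : ℝ) : ℂ) ^ 2) + b * (1 - ((‖a‖ : ℝ) : ℂ) ^ 2)) /
    (1 - ((‖a‖ : ℝ) : ℂ) ^ 2 * ((‖b‖ : ℝ) : ℂ) ^ 2)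

lemma intersectionPoint_comm (a b : ℂ) : intersectionPoint a b = intersectionPoint b a := by
  unfold intersectionPoint; ring

/-- The parameter `t = (1 - |a|²) |b|² / (1 - |a|² |b|²)` places `intersectionPoint a b` on the line
from `a` to `1 / b̄`; the identity `|b|² / b̄ = b` turns `t / b̄` into a multiple of `b`. -/
lemma intersectionPoint_mem_lineThrough (a b : ℂ) (hprod : ‖a‖ * ‖b‖ ≠ 1) :
    intersectionPoint a b ∈ lineThrough a (1 / conj b) := by
  have hD : (1 : ℂ) - ((‖a‖ : ℝ) : ℂ) ^ 2 * ((‖b‖ : ℝ) : ℂ) ^ 2 ≠ 0 := by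
    have hsq : (‖a‖ * ‖b‖) ^ 2 ≠ 1 := by
      rwa [Ne, pow_eq_one_iff_of_nonneg (by positivity) two_ne_zero]
    rw [sub_ne_zero, ne_comm, ← mul_pow]
    exact_mod_cast hsq
  have hline : AffineMap.lineMap a (1 / conj b)
      ((1 - ‖a‖ ^ 2) * ‖b‖ ^ 2 / (1 - ‖a‖ ^ 2 * ‖b‖ ^ 2) : ℝ) = intersectionPoint a b := by
    have hb := sq_norm_div_conj b
    rw [AffineMap.lineMap_apply_module', Complex.real_smul, intersectionPoint, eq_div_iff hD]
    push_cast
    field_simp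
    linear_combination (1 - ((‖a‖ : ℝ) : ℂ) ^ 2) * hb
  exact hline ▸ lineMap_mem_lineThrough _ _ _

theorem stmt2_general (a b : ℂ)
    (hprod : ‖a‖ * ‖b‖ ≠ 1) :
    (a * (1 - ((‖b‖ : ℝ) : ℂ) ^ 2) + b * (1 - ((‖a‖ : ℝ) : ℂ) ^ 2)) /
        (1 - ((‖a‖ : ℝ) : ℂ) ^ 2 * ((‖b‖ : ℝ) : ℂ) ^ 2) ∈
        lineThrough a (1 / conj b) ∧
    (a * (1 - ((‖b‖ : ℝ) : ℂ) ^ 2) + b * (1 - ((‖a‖ : ℝ) : ℂ) ^ 2)) /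
        (1 - ((‖a‖ : ℝ) : ℂ) ^ 2 * ((‖b‖ : ℝ) : ℂ) ^ 2) ∈
        lineThrough b (1 / conj a) := by
  refine ⟨intersectionPoint_mem_lineThrough a b hprod, ?_⟩
  rw [← intersectionPoint, intersectionPoint_comm]
  exact intersectionPoint_mem_lineThrough b a (by rwa [mul_comm])

/-- Proposition (LIS, case 3): the intersection of the line through `a, 1/b̄`
with the line through `b, 1/ā`.  Non-parallelism of the two lines is encoded
by the hypothesis that they meet in exactly one point. -/
theorem stmt2 (a b : ℂ) (hab1 : a ≠ 1 / conj b) (hab2 : b ≠ 1 / conj a)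
    (hprod : ‖a‖ * ‖b‖ ≠ 1)
    (hnp : ∃! z : ℂ, z ∈ lineThrough a (1 / conj b) ∧ z ∈ lineThrough b (1 / conj a)) :
    (a * (1 - ((‖b‖ : ℝ) : ℂ) ^ 2) + b * (1 - ((‖a‖ : ℝ) : ℂ) ^ 2)) /
        (1 - ((‖a‖ : ℝ) : ℂ) ^ 2 * ((‖b‖ : ℝ) : ℂ) ^ 2) ∈
        lineThrough a (1 / conj b) ∧
    (a * (1 - ((‖b‖ : ℝ) : ℂ) ^ 2) + b * (1 - ((‖a‖ : ℝ) : ℂ) ^ 2)) /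
        (1 - ((‖a‖ : ℝ) : ℂ) ^ 2 * ((‖b‖ : ℝ) : ℂ) ^ 2) ∈
        lineThrough b (1 / conj a) :=
  stmt2_general a b hprod
end

section
/- Let a, b be complex numbers with |a||b| ≠ 1 and such that the lines L(a, -1/b̄) and L(b, -1/ā) are non-parallel. Then their intersection point equals (a(1+|b|²) + b(1+|a|²))/(1 - |a|²|b|²). -/
open ComplexConjugate

/-! Since `|b|² · (-1/b̄) = -b`, the candidate point `z` satisfies `z - a = r • (-1/b̄ - a)`
for the real ratio `r = -(1 + |a|²) |b|² / (1 - |a|² |b|²)`, so it lies on `L(a, -1/b̄)`;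
as `z` is symmetric in `a` and `b`, it also lies on `L(b, -1/ā)`. -/

lemma Complex.ofReal_sq_norm_mul_neg_one_div_conj (b : ℂ) :
    (‖b‖ : ℂ) ^ 2 * (-1 / conj b) = -b := by
  rcases eq_or_ne b 0 with rfl | hb
  · simp
  · rw [← Complex.mul_conj']
    field_simp [(map_ne_zero _).2 hb]

lemma one_sub_sq_norm_mul_sq_norm_ne_zero {a b : ℂ} (h : ‖a‖ * ‖b‖ ≠ 1) :
    1 - (‖a‖ : ℂ) ^ 2 * (‖b‖ : ℂ) ^ 2 ≠ 0 := by
  norm_cast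
  rwa [← mul_pow, sub_eq_zero, eq_comm, pow_eq_one_iff_of_nonneg (by positivity) two_ne_zero]

lemma mem_lineThrough_neg_one_div_conj {a b : ℂ} (h : ‖a‖ * ‖b‖ ≠ 1) :
    (a * (1 + (‖b‖ : ℂ) ^ 2) + b * (1 + (‖a‖ : ℂ) ^ 2)) /
        (1 - (‖a‖ : ℂ) ^ 2 * (‖b‖ : ℂ) ^ 2) ∈ lineThrough a (-1 / conj b) := by
  set r : ℝ := -(1 + ‖a‖ ^ 2) * ‖b‖ ^ 2 / (1 - ‖a‖ ^ 2 * ‖b‖ ^ 2) with hr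
  have hD := one_sub_sq_norm_mul_sq_norm_ne_zero h
  have hstep : (r : ℂ) * (-1 / conj b - a) =
      (1 + (‖a‖ : ℂ) ^ 2) * (b + (‖b‖ : ℂ) ^ 2 * a) / (1 - (‖a‖ : ℂ) ^ 2 * (‖b‖ : ℂ) ^ 2) := by
    rw [hr]
    push_cast
    linear_combination (-(1 + (‖a‖ : ℂ) ^ 2) / (1 - (‖a‖ : ℂ) ^ 2 * (‖b‖ : ℂ) ^ 2)) *
      Complex.ofReal_sq_norm_mul_neg_one_div_conj b
  have hz : (a * (1 + (‖b‖ : ℂ) ^ 2) + b * (1 + (‖a‖ : ℂ) ^ 2)) /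
      (1 - (‖a‖ : ℂ) ^ 2 * (‖b‖ : ℂ) ^ 2) = r • (-1 / conj b -ᵥ a) +ᵥ a := by
    rw [vsub_eq_sub, vadd_eq_add, Complex.real_smul, hstep]
    linear_combination a * div_self hD
  rw [lineThrough, SetLike.mem_coe, hz]
  exact smul_vsub_vadd_mem_affineSpan_pair r _ _

theorem stmt3_general (a b : ℂ)
    (hprod : ‖a‖ * ‖b‖ ≠ 1) :
    (a * (1 + (‖b‖ : ℂ) ^ 2) + b * (1 + (‖a‖ : ℂ) ^ 2)) /
        (1 - (‖a‖ : ℂ) ^ 2 * (‖b‖ : ℂ) ^ 2) ∈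
        lineThrough a (-1 / conj b) ∧
    (a * (1 + (‖b‖ : ℂ) ^ 2) + b * (1 + (‖a‖ : ℂ) ^ 2)) /
        (1 - (‖a‖ : ℂ) ^ 2 * (‖b‖ : ℂ) ^ 2) ∈
        lineThrough b (-1 / conj a) := by
  refine ⟨mem_lineThrough_neg_one_div_conj hprod, ?_⟩
  convert mem_lineThrough_neg_one_div_conj (a := b) (b := a) (by rwa [mul_comm]) using 2 <;> ring

/-- Proposition (LIS, case 4): the intersection of the line through `a, -1/b̄`
with the line through `b, -1/ā`.  Non-parallelism of the two lines is encoded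
by the hypothesis that they meet in exactly one point. -/
theorem stmt3 (a b : ℂ) (hab1 : a ≠ -1 / conj b) (hab2 : b ≠ -1 / conj a)
    (hprod : ‖a‖ * ‖b‖ ≠ 1)
    (hnp : ∃! z : ℂ, z ∈ lineThrough a (-1 / conj b) ∧ z ∈ lineThrough b (-1 / conj a)) :
    (a * (1 + (‖b‖ : ℂ) ^ 2) + b * (1 + (‖a‖ : ℂ) ^ 2)) /
        (1 - (‖a‖ : ℂ) ^ 2 * (‖b‖ : ℂ) ^ 2) ∈
        lineThrough a (-1 / conj b) ∧
    (a * (1 + (‖b‖ : ℂ) ^ 2) + b * (1 + (‖a‖ : ℂ) ^ 2)) /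
        (1 - (‖a‖ : ℂ) ^ 2 * (‖b‖ : ℂ) ^ 2) ∈
        lineThrough b (-1 / conj a) :=
  stmt3_general a b hprod
end

section
/- For a in the open unit disk 𝔹² ⊂ ℂ, the map T_a(z) = (z - a)/(1 - āz) restricted to 𝔹² is Lipschitz with respect to the Euclidean metric with best Lipschitz constant (1 + |a|)/(1 - |a|); that is, |T_a(x) - T_a(y)| ≤ ((1+|a|)/(1-|a|))|x - y| for all x, y ∈ 𝔹², and this constant cannot be improved. -/
/-!
`T_a x - T_a y = (1 - |a|²)(x - y) / ((1 - āx)(1 - āy))`, and `|1 - āz| ≥ 1 - |a|` on the closed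
disk, which gives the constant `(1 - |a|²)/(1 - |a|)² = (1 + |a|)/(1 - |a|)`. Both factors
`|1 - āz|` tend to `1 - |a|` as `x, y` run to the boundary along the ray through `a`, so the
constant is attained in the limit.
-/

open ComplexConjugate

open Complex Filter Topology

noncomputable def diskAut (a z : ℂ) : ℂ := (z - a) / (1 - conj a * z)

lemma one_sub_norm_mul_le_norm_one_sub_conj_mul (a z : ℂ) :
    1 - ‖a‖ * ‖z‖ ≤ ‖1 - conj a * z‖ := by
  simpa [norm_mul] using norm_sub_norm_le (1 : ℂ) (conj a * z)

lemma diskAut_sub_diskAut {a x y : ℂ} (hx : 1 - conj a * x ≠ 0) (hy : 1 - conj a * y ≠ 0) :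
    diskAut a x - diskAut a y =
      (1 - conj a * a) * (x - y) / ((1 - conj a * x) * (1 - conj a * y)) := by
  rw [diskAut, diskAut, div_sub_div _ _ hx hy]
  ring

lemma norm_one_sub_conj_mul_self {a : ℂ} (ha : ‖a‖ ≤ 1) : ‖1 - conj a * a‖ = 1 - ‖a‖ ^ 2 := by
  rw [conj_mul', ← ofReal_pow, ← ofReal_one, ← ofReal_sub, norm_real, Real.norm_of_nonneg]
  nlinarith [norm_nonneg a]

lemma norm_diskAut_sub_diskAut {a x y : ℂ} (ha : ‖a‖ ≤ 1) (hx : 1 - conj a * x ≠ 0)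
    (hy : 1 - conj a * y ≠ 0) :
    ‖diskAut a x - diskAut a y‖ =
      (1 - ‖a‖ ^ 2) / (‖1 - conj a * x‖ * ‖1 - conj a * y‖) * ‖x - y‖ := by
  rw [diskAut_sub_diskAut hx hy, norm_div, norm_mul, norm_mul, norm_one_sub_conj_mul_self ha,
    mul_div_right_comm]

lemma norm_diskAut_sub_diskAut_le {a x y : ℂ} (ha : ‖a‖ < 1) (hx : ‖x‖ ≤ 1) (hy : ‖y‖ ≤ 1) :
    ‖diskAut a x - diskAut a y‖ ≤ (1 + ‖a‖) / (1 - ‖a‖) * ‖x - y‖ := by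
  have hr : 0 < 1 - ‖a‖ := sub_pos.mpr ha
  have hden (z : ℂ) (hz : ‖z‖ ≤ 1) : 1 - ‖a‖ ≤ ‖1 - conj a * z‖ :=
    (one_sub_norm_mul_le_norm_one_sub_conj_mul a z).trans' <| by
      nlinarith [norm_nonneg a]
  have hne (z : ℂ) (hz : ‖z‖ ≤ 1) : 1 - conj a * z ≠ 0 :=
    norm_pos_iff.mp (hr.trans_le (hden z hz))
  rw [norm_diskAut_sub_diskAut ha.le (hne x hx) (hne y hy)]
  gcongr ?_ * _
  calc (1 - ‖a‖ ^ 2) / (‖1 - conj a * x‖ * ‖1 - conj a * y‖)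
      ≤ (1 - ‖a‖ ^ 2) / ((1 - ‖a‖) * (1 - ‖a‖)) := by
        gcongr
        · nlinarith [norm_nonneg a]
        · exact hden x hx
        · exact hden y hy
    _ = (1 + ‖a‖) / (1 - ‖a‖) := by field_simp; ring

lemma exists_norm_eq_one_conj_mul_eq_norm (a : ℂ) : ∃ u : ℂ, ‖u‖ = 1 ∧ conj a * u = ‖a‖ := by
  have hu := norm_exp_ofReal_mul_I (arg a)
  refine ⟨exp (arg a * I), hu, ?_⟩
  nth_rw 1 [← norm_mul_exp_arg_mul_I a]
  rw [map_mul, conj_ofReal, mul_assoc, conj_mul', hu]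
  simp

lemma norm_one_sub_conj_mul_ray {a u : ℂ} (hau : conj a * u = ‖a‖) {t : ℝ}
    (ht : t * ‖a‖ ≤ 1) :
    ‖1 - conj a * (t * u)‖ = 1 - t * ‖a‖ := by
  rw [mul_left_comm, hau, ← ofReal_mul, ← ofReal_one, ← ofReal_sub, norm_real,
    Real.norm_of_nonneg (sub_nonneg.mpr ht)]

lemma norm_diskAut_sub_diskAut_ray {a u : ℂ} (hu : ‖u‖ = 1) (hau : conj a * u = ‖a‖)
    (ha : ‖a‖ ≤ 1) {t s : ℝ} (ht : t * ‖a‖ < 1) (hs : s * ‖a‖ < 1) :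
    ‖diskAut a (t * u) - diskAut a (s * u)‖ =
      (1 - ‖a‖ ^ 2) / ((1 - t * ‖a‖) * (1 - s * ‖a‖)) * |t - s| := by
  have hnorm (t : ℝ) (ht : t * ‖a‖ < 1) : ‖1 - conj a * (t * u)‖ = 1 - t * ‖a‖ :=
    norm_one_sub_conj_mul_ray hau ht.le
  have hne (t : ℝ) (ht : t * ‖a‖ < 1) : 1 - conj a * (t * u) ≠ 0 :=
    norm_pos_iff.mp <| by rw [hnorm t ht]; linarith
  rw [norm_diskAut_sub_diskAut ha (hne t ht) (hne s hs), hnorm t ht, hnorm s hs, ← sub_mul,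
    norm_mul, hu, mul_one, ← ofReal_sub, norm_real, Real.norm_eq_abs]

lemma le_of_forall_norm_diskAut_sub_le {a : ℂ} (ha : ‖a‖ < 1) {K : ℝ}
    (hK : ∀ x y : ℂ, ‖x‖ < 1 → ‖y‖ < 1 → ‖diskAut a x - diskAut a y‖ ≤ K * ‖x - y‖) :
    (1 + ‖a‖) / (1 - ‖a‖) ≤ K := by
  obtain ⟨u, hu, hau⟩ := exists_norm_eq_one_conj_mul_eq_norm a
  set r := ‖a‖
  have hr : 0 ≤ r := norm_nonneg a
  -- compare the images of `t u` and of the midpoint of `t u` and `u`, then let `t → 1`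
  set f : ℝ → ℝ := fun t ↦ (1 - r ^ 2) / ((1 - t * r) * (1 - (1 + t) / 2 * r))
  have hfK : ∀ t ∈ Set.Ioo (0 : ℝ) 1, f t ≤ K := by
    rintro t ⟨ht0, ht1⟩
    have hnorm {s : ℝ} (hs : 0 ≤ s) : ‖(s : ℂ) * u‖ = s := by
      rw [norm_mul, hu, mul_one, norm_real, Real.norm_of_nonneg hs]
    have hlt {s : ℝ} (hs : s < 1) : s * r < 1 := by nlinarith
    have H := hK (t * u) (((1 + t) / 2 : ℝ) * u) (by rw [hnorm ht0.le]; exact ht1)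
      (by rw [hnorm (by linarith)]; linarith)
    rw [norm_diskAut_sub_diskAut_ray hu hau ha.le (hlt ht1) (hlt (by linarith)), ← sub_mul,
      norm_mul, hu, mul_one, ← ofReal_sub, norm_real, Real.norm_eq_abs] at H
    exact le_of_mul_le_mul_right H (abs_pos.mpr (by linarith))
  have hf1 : f 1 = (1 + r) / (1 - r) := by
    have h : (1 - 1 * r) * (1 - (1 + 1) / 2 * r) = (1 - r) * (1 - r) := by ring
    have : 1 - r ≠ 0 := by linarith
    simp only [f, h]
    field_simp
    ring
  have hcont : ContinuousAt f 1 := by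
    refine ContinuousAt.div (by fun_prop) (by fun_prop) ?_
    norm_num
    nlinarith
  have hlim : Tendsto f (𝓝[<] 1) (𝓝 ((1 + r) / (1 - r))) :=
    hf1 ▸ hcont.tendsto.mono_left nhdsWithin_le_nhds
  exact le_of_tendsto hlim (eventually_of_mem (Ioo_mem_nhdsLT zero_lt_one) hfK)

/-- `T_a(z) = (z-a)/(1-āz)` is Lipschitz on the unit disk with best constant
`(1+|a|)/(1-|a|)` in the Euclidean metric. -/
theorem stmt7 (a : ℂ) (ha : ‖a‖ < 1) :
    (∀ x y : ℂ, ‖x‖ < 1 → ‖y‖ < 1 →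
      ‖(x - a) / (1 - conj a * x) - (y - a) / (1 - conj a * y)‖ ≤
        (1 + ‖a‖) / (1 - ‖a‖) * ‖x - y‖) ∧
    ∀ K : ℝ,
      (∀ x y : ℂ, ‖x‖ < 1 → ‖y‖ < 1 →
        ‖(x - a) / (1 - conj a * x) - (y - a) / (1 - conj a * y)‖ ≤
          K * ‖x - y‖) →
      (1 + ‖a‖) / (1 - ‖a‖) ≤ K :=
  ⟨fun _ _ hx hy ↦ norm_diskAut_sub_diskAut_le ha hx.le hy.le,
    fun _ ↦ le_of_forall_norm_diskAut_sub_le ha⟩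
end

section
/- If a, b lie in the open unit disk 𝔹² ⊂ ℂ, then their chordal midpoint m = (a(1+|b|²) + b(1+|a|²)) / (|1 + a b̄|·√((1+|a|²)(1+|b|²)) - |ab|² + 1) also lies in 𝔹². -/
/-!
With `N = a(1+|b|²) + b(1+|a|²)`, the Lagrange-type identity
`|N|² + (1 - |ab|²)² = |1 + a b̄|² (1+|a|²)(1+|b|²)` gives `|N|² < (P + u)²` for
`P = |1 + a b̄| √((1+|a|²)(1+|b|²))` and `u = 1 - |ab|² > 0`; and `P + u` is the denominator.
-/

open ComplexConjugate

theorem norm_sq_add_sq_eq_norm_one_add_mul_conj_sq (a b : ℂ) :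
    ‖a * (1 + (‖b‖ : ℂ) ^ 2) + b * (1 + (‖a‖ : ℂ) ^ 2)‖ ^ 2 + (1 - ‖a * b‖ ^ 2) ^ 2 =
      ‖1 + a * conj b‖ ^ 2 * ((1 + ‖a‖ ^ 2) * (1 + ‖b‖ ^ 2)) := by
  have hcast (z : ℂ) : (‖z‖ : ℂ) ^ 2 = ((z.re ^ 2 + z.im ^ 2 : ℝ) : ℂ) := by
    rw [← Complex.ofReal_pow, Complex.sq_norm, Complex.normSq_apply]
    ring_nf
  simp only [hcast, norm_mul, mul_pow, Complex.sq_norm, Complex.normSq_apply, Complex.add_re,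
    Complex.add_im, Complex.mul_re, Complex.mul_im, Complex.ofReal_re, Complex.ofReal_im,
    Complex.one_re, Complex.one_im, Complex.conj_re, Complex.conj_im]
  ring

theorem lt_add_of_sq_add_sq_eq {n u p : ℝ} (hu : 0 < u) (hp : 0 ≤ p)
    (h : n ^ 2 + u ^ 2 = p ^ 2) : n < p + u :=
  lt_of_pow_lt_pow_left₀ 2 (by positivity) (by nlinarith)

noncomputable def chordalMidpoint (a b : ℂ) : ℂ :=
  (a * (1 + (‖b‖ : ℂ) ^ 2) + b * (1 + (‖a‖ : ℂ) ^ 2)) /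
    ((‖1 + a * conj b‖ * Real.sqrt ((1 + ‖a‖ ^ 2) * (1 + ‖b‖ ^ 2)) - ‖a * b‖ ^ 2 + 1 : ℝ) : ℂ)

theorem norm_chordalMidpoint_lt_one {a b : ℂ} (hab : ‖a * b‖ < 1) :
    ‖chordalMidpoint a b‖ < 1 := by
  set S := Real.sqrt ((1 + ‖a‖ ^ 2) * (1 + ‖b‖ ^ 2))
  have hu : 0 < 1 - ‖a * b‖ ^ 2 := by nlinarith [norm_nonneg (a * b)]
  have hS : S ^ 2 = (1 + ‖a‖ ^ 2) * (1 + ‖b‖ ^ 2) := Real.sq_sqrt (by positivity)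
  have hnum : ‖a * (1 + (‖b‖ : ℂ) ^ 2) + b * (1 + (‖a‖ : ℂ) ^ 2)‖ <
      ‖1 + a * conj b‖ * S + (1 - ‖a * b‖ ^ 2) :=
    lt_add_of_sq_add_sq_eq hu (by positivity) <| by
      rw [mul_pow, hS]
      exact norm_sq_add_sq_eq_norm_one_add_mul_conj_sq a b
  have hden : 0 < ‖1 + a * conj b‖ * S - ‖a * b‖ ^ 2 + 1 := by
    linarith [(norm_nonneg _).trans_lt hnum]
  rw [chordalMidpoint, norm_div, Complex.norm_real, Real.norm_of_nonneg hden.le,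
    div_lt_one hden]
  linarith

/-- If `a, b` lie in the open unit disk, so does their chordal midpoint `m`. -/
theorem stmt12 (a b : ℂ) (ha : ‖a‖ < 1) (hb : ‖b‖ < 1)
    (m : ℂ)
    (hm : m = (a * (1 + (‖b‖ : ℂ) ^ 2) + b * (1 + (‖a‖ : ℂ) ^ 2)) /
      ((‖1 + a * conj b‖ *
          Real.sqrt ((1 + ‖a‖ ^ 2) * (1 + ‖b‖ ^ 2)) -
          ‖a * b‖ ^ 2 + 1 : ℝ) : ℂ)) :
    ‖m‖ < 1 := by
  subst hm
  refine norm_chordalMidpoint_lt_one ?_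
  rw [norm_mul]
  exact mul_lt_one_of_nonneg_of_lt_one_left (norm_nonneg a) ha hb.le
end

section
/- Let a, b, c, d ∈ ℂ be four distinct points, not all lying on one line with |a-b| = |c-d|. Set k₀ = (b-c)(a-d) and k₁ = (a-c)(b-d) + (a-b)(c-d), and assume k₀ ≠ 0. Let y be a root of k₀y² + 2k₁y + k₀ = 0, and define p = -((b-c)y + a-d)/(a-b-c+d), q = ((b-c)(a+d)y + (b+c)(a-d))/(2(a-b-c+d)), s = -((b+c)(a-d)y + (b-c)(a+d))/(2((a-d)y + (b-c))). Then the Möbius transformation h(z) = (pz + q)/(z + s) satisfies h(a) = -1, h(b) = y, h(c) = -y, h(d) = 1. -/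
/-!
Cleared of denominators, each equation `h(z) = w` says `p z + q = w (z + s)`, and this is a
multiple of the quadratic equation satisfied by `y`. The denominators `z + s` cannot vanish:
if `z₀ + s = 0`, the equation at `z₀` forces `p z₀ + q = 0`, so `p z + q = p (z + s)` and `h`
is constant away from `z₀`, whereas it takes two different values at two other points
(`±y` with `y ≠ 0`, or `±1`).
-/

variable {K : Type*} [Field K]

theorem eq_of_mul_add_eq_of_add_eq_zero {p q s z₀ w₀ z w : K}
    (h₀ : p * z₀ + q = w₀ * (z₀ + s)) (hs : z₀ + s = 0)
    (h : p * z + q = w * (z + s)) (hz : z ≠ z₀) : w = p := by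
  have key : (w - p) * (z - z₀) = 0 := by linear_combination h₀ - h + (w₀ - w) * hs
  exact sub_eq_zero.mp ((mul_eq_zero.mp key).resolve_right (sub_ne_zero.mpr hz))

theorem add_ne_zero_of_mul_add_eq {p q s z₀ w₀ z₁ w₁ z₂ w₂ : K}
    (h₀ : p * z₀ + q = w₀ * (z₀ + s)) (h₁ : p * z₁ + q = w₁ * (z₁ + s))
    (h₂ : p * z₂ + q = w₂ * (z₂ + s)) (hz₁ : z₁ ≠ z₀) (hz₂ : z₂ ≠ z₀) (hw : w₁ ≠ w₂) :
    z₀ + s ≠ 0 := fun hs =>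
  hw <| (eq_of_mul_add_eq_of_add_eq_zero h₀ hs h₁ hz₁).trans
    (eq_of_mul_add_eq_of_add_eq_zero h₀ hs h₂ hz₂).symm

theorem symmetrization_mul_add_eq [NeZero (2 : K)] {a b c d y p q s : K}
    (hroot : (b - c) * (a - d) * y ^ 2 +
      2 * ((a - c) * (b - d) + (a - b) * (c - d)) * y + (b - c) * (a - d) = 0)
    (hden1 : a - b - c + d ≠ 0) (hden2 : (a - d) * y + (b - c) ≠ 0)
    (hp : p = -(((b - c) * y + a - d) / (a - b - c + d)))
    (hq : q = ((b - c) * (a + d) * y + (b + c) * (a - d)) / (2 * (a - b - c + d)))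
    (hs : s = -(((b + c) * (a - d) * y + (b - c) * (a + d)) /
      (2 * ((a - d) * y + (b - c))))) :
    p * a + q = -1 * (a + s) ∧ p * b + q = y * (b + s) ∧
    p * c + q = -y * (c + s) ∧ p * d + q = 1 * (d + s) := by
  -- the form of the denominator that `field_simp` looks for
  have hden2' : y * (a - d) + (b - c) ≠ 0 := by rwa [mul_comm]
  subst hp hq hs
  refine ⟨?_, ?_, ?_, ?_⟩ <;> field_simp
  · linear_combination (-(a - d)) * hroot
  · linear_combination (-(b - c)) * hroot
  · linear_combination (b - c) * hroot
  · linear_combination (a - d) * hroot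

theorem stmt15_general (a b c d y : ℂ)
    (hab : a ≠ b) (hac : a ≠ c)
    (hbd : b ≠ d) (hcd : c ≠ d)
    (hk0 : (b - c) * (a - d) ≠ 0)
    (hroot : (b - c) * (a - d) * y ^ 2 +
      2 * ((a - c) * (b - d) + (a - b) * (c - d)) * y + (b - c) * (a - d) = 0)
    (hden1 : a - b - c + d ≠ 0)
    (hden2 : (a - d) * y + (b - c) ≠ 0)
    (p q s : ℂ)
    (hp : p = -(((b - c) * y + a - d) / (a - b - c + d)))
    (hq : q = ((b - c) * (a + d) * y + (b + c) * (a - d)) / (2 * (a - b - c + d)))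
    (hs : s = -(((b + c) * (a - d) * y + (b - c) * (a + d)) /
      (2 * ((a - d) * y + (b - c))))) :
    (p * a + q) / (a + s) = -1 ∧
    (p * b + q) / (b + s) = y ∧
    (p * c + q) / (c + s) = -y ∧
    (p * d + q) / (d + s) = 1 := by
  obtain ⟨ha, hb, hc, hd⟩ := symmetrization_mul_add_eq hroot hden1 hden2 hp hq hs
  have hy : y ≠ -y := by
    intro h
    apply hk0
    simpa [CharZero.eq_neg_self_iff.mp h] using hroot
  have h1 : (-1 : ℂ) ≠ 1 := by norm_num
  exact ⟨div_eq_of_eq_mul (add_ne_zero_of_mul_add_eq ha hb hc hab.symm hac.symm hy) ha,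
    div_eq_of_eq_mul (add_ne_zero_of_mul_add_eq hb ha hd hab hbd.symm h1) hb,
    div_eq_of_eq_mul (add_ne_zero_of_mul_add_eq hc ha hd hac hcd.symm h1) hc,
    div_eq_of_eq_mul (add_ne_zero_of_mul_add_eq hd hb hc hbd hcd hy) hd⟩

/-- Symmetrization lemma: the Möbius transformation `h(z) = (pz + q)/(z + s)`
with the given coefficients maps `a, b, c, d` to `-1, y, -y, 1`. -/
theorem stmt15 (a b c d y : ℂ)
    (hab : a ≠ b) (hac : a ≠ c) (had : a ≠ d)
    (hbc : b ≠ c) (hbd : b ≠ d) (hcd : c ≠ d)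
    (hk0 : (b - c) * (a - d) ≠ 0)
    (hroot : (b - c) * (a - d) * y ^ 2 +
      2 * ((a - c) * (b - d) + (a - b) * (c - d)) * y + (b - c) * (a - d) = 0)
    (hden1 : a - b - c + d ≠ 0)
    (hden2 : (a - d) * y + (b - c) ≠ 0)
    (p q s : ℂ)
    (hp : p = -(((b - c) * y + a - d) / (a - b - c + d)))
    (hq : q = ((b - c) * (a + d) * y + (b + c) * (a - d)) / (2 * (a - b - c + d)))
    (hs : s = -(((b + c) * (a - d) * y + (b - c) * (a + d)) /
      (2 * ((a - d) * y + (b - c))))) :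
    (p * a + q) / (a + s) = -1 ∧
    (p * b + q) / (b + s) = y ∧
    (p * c + q) / (c + s) = -y ∧
    (p * d + q) / (d + s) = 1 :=
  stmt15_general a b c d y hab hac hbd hcd hk0 hroot hden1 hden2 p q s hp hq hs
end

section
/- Let a, b, c, d be four distinct points on the unit circle in ℂ listed in positive (counterclockwise) order, and assume a - b + c - d ≠ 0. Then the point w₄ = ((ac - bd) ± √((a-b)(b-c)(c-d)(d-a)))/(a - b + c - d), with the sign chosen so that |w₄| < 1, is the intersection point of the hyperbolic lines J*[a,c] and J*[b,d] in the unit disk; in particular, w₄ lies on both the circle through a and c orthogonal to the unit circle and the circle through b and d orthogonal to the unit circle. -/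
/-- `w` lies on the hyperbolic geodesic line `J*[x,y]` of the Poincaré disk
model: either `x, y` are collinear with `0` and `w` lies on the diameter through
them, or `w` lies on the circle through `x` and `y` orthogonal to the unit
circle (a circle `S¹(z, r)` is orthogonal to `S¹` iff `|z|² = 1 + r²`). -/
def onHypLine (x y w : ℂ) : Prop :=
  (Collinear ℝ ({0, x, y} : Set ℂ) ∧ Collinear ℝ ({x, y, w} : Set ℂ)) ∨
  (∃ z : ℂ, ∃ r : ℝ, 0 < r ∧
    ‖x - z‖ = r ∧ ‖y - z‖ = r ∧ ‖w - z‖ = r ∧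
    ‖z‖ ^ 2 = 1 + r ^ 2)

/-!
For unit `x ≠ y`, a point `p` lies on `J*[x,y]` as soon as `2 (p + x y p̄) = (1 + |p|²)(x + y)`:
for `x + y ≠ 0` this is `|p - z|² = |x - z|²` with `z = 2xy/(x+y)` the centre of the orthogonal
circle, and for `x + y = 0` it says that `p / x` is real. A unimodular solution is `x` or `y`.

The half-angle formula gives `(a-b)(b-c)(c-d)(d-a) = r·abcd` with `r < 0` because the points are
in cyclic order, so `w̄ = -w/(abcd)`. Then `p = (ac - bd + w)/(a - b + c - d)` solves the equation
of `J*[a,c]`, and by the symmetry `(a,b,c,d,w) ↦ (b,c,d,a,-w)` that of `J*[b,d]`. The points for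
`±w` satisfy `p₊ p̄₋ = 1` and neither lies on the unit circle, so one of them lies inside.
-/

open Complex ComplexConjugate

lemma ne_zero_of_norm_eq_one {x : ℂ} (hx : ‖x‖ = 1) : x ≠ 0 :=
  norm_ne_zero_iff.1 (hx ▸ one_ne_zero)

lemma exp_mul_I_sub_exp_mul_I (x y : ℝ) :
    exp (x * I) - exp (y * I) = 2 * I * Real.sin ((x - y) / 2) * exp ((x + y) / 2 * I) := by
  have hx : exp (x * I) = exp ((x - y) / 2 * I) * exp ((x + y) / 2 * I) := by
    rw [← exp_add]; ring_nf
  have hy : exp (y * I) = exp (-((x - y) / 2) * I) * exp ((x + y) / 2 * I) := by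
    rw [← exp_add]; ring_nf
  rw [ofReal_sin, sin, hx, hy]
  push_cast
  linear_combination
    (exp ((x - y) / 2 * I) - exp (-((x - y) / 2) * I)) * exp ((x + y) / 2 * I) * I_sq

lemma Real.sin_half_sub_neg {x y : ℝ} (hxy : x < y) (hyx : y < x + 2 * Real.pi) :
    Real.sin ((x - y) / 2) < 0 := by
  rw [show (x - y) / 2 = -((y - x) / 2) by ring, Real.sin_neg, neg_neg_iff_pos]
  exact Real.sin_pos_of_pos_of_lt_pi (by linarith) (by linarith)

lemma exp_mul_I_ne_exp_mul_I {x y : ℝ} (hxy : x < y) (hyx : y < x + 2 * Real.pi) :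
    exp (x * I) ≠ exp (y * I) := by
  rw [← sub_ne_zero, exp_mul_I_sub_exp_mul_I]
  have := (Real.sin_half_sub_neg hxy hyx).ne
  exact mul_ne_zero (mul_ne_zero (mul_ne_zero two_ne_zero I_ne_zero) (ofReal_ne_zero.2 this))
    (exp_ne_zero _)

lemma exists_neg_prod_sub_eq_mul {t₁ t₂ t₃ t₄ : ℝ}
    (h12 : t₁ < t₂) (h23 : t₂ < t₃) (h34 : t₃ < t₄) (h41 : t₄ < t₁ + 2 * Real.pi) :
    ∃ r : ℝ, r < 0 ∧
      (exp (t₁ * I) - exp (t₂ * I)) * (exp (t₂ * I) - exp (t₃ * I)) *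
        (exp (t₃ * I) - exp (t₄ * I)) * (exp (t₄ * I) - exp (t₁ * I)) =
      r * (exp (t₁ * I) * exp (t₂ * I) * exp (t₃ * I) * exp (t₄ * I)) := by
  have hexp : exp ((t₁ + t₂) / 2 * I) * exp ((t₂ + t₃) / 2 * I) * exp ((t₃ + t₄) / 2 * I) *
      exp ((t₄ + t₁) / 2 * I) = exp (t₁ * I) * exp (t₂ * I) * exp (t₃ * I) * exp (t₄ * I) := by
    simp only [← exp_add]; ring_nf
  refine ⟨16 * (Real.sin ((t₁ - t₂) / 2) * Real.sin ((t₂ - t₃) / 2) * Real.sin ((t₃ - t₄) / 2)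
    * Real.sin ((t₄ - t₁) / 2)), ?_, ?_⟩
  · have h1 := Real.sin_half_sub_neg h12 (by linarith)
    have h2 := Real.sin_half_sub_neg h23 (by linarith)
    have h3 := Real.sin_half_sub_neg h34 (by linarith)
    have h4 : 0 < Real.sin ((t₄ - t₁) / 2) :=
      Real.sin_pos_of_pos_of_lt_pi (by linarith) (by linarith)
    have hpos := mul_pos_of_neg_of_neg h1 h2
    nlinarith [mul_neg_of_pos_of_neg hpos h3]
  · simp only [exp_mul_I_sub_exp_mul_I, ← hexp]
    push_cast
    ring_nf
    rw [I_pow_four]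
    ring

lemma conj_eq_neg_div_of_sq_eq_mul {w u : ℂ} {r : ℝ} (hu : ‖u‖ = 1) (hr : r ≤ 0)
    (hw : w ^ 2 = r * u) : conj w = -w / u := by
  rcases eq_or_ne w 0 with rfl | hw0
  · simp
  have hu0 := ne_zero_of_norm_eq_one hu
  have hnorm : ‖w‖ ^ 2 = -r := by
    rw [← norm_pow, hw, norm_mul, hu, mul_one, norm_real, Real.norm_of_nonpos hr]
  refine mul_left_cancel₀ hw0 ?_
  rw [mul_conj', ← ofReal_pow, hnorm]
  field_simp
  push_cast
  linear_combination hw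

lemma collinear_of_forall_mem_exists_eq_smul {s : Set ℂ} (x : ℂ)
    (h : ∀ q ∈ s, ∃ t : ℝ, q = t * x) : Collinear ℝ s := by
  rw [collinear_iff_exists_forall_eq_smul_vadd]
  refine ⟨0, x, fun q hq => ?_⟩
  obtain ⟨t, rfl⟩ := h q hq
  exact ⟨t, by simp [real_smul]⟩

def HypLineEq (x y p : ℂ) : Prop :=
  2 * (p + x * y * conj p) = (1 + p * conj p) * (x + y)

namespace HypLineEq

variable {x y p : ℂ}

lemma onHypLine_of_add_eq_zero (hx : ‖x‖ = 1) (hxy : x + y = 0) (h : HypLineEq x y p) :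
    onHypLine x y p := by
  have hx0 := ne_zero_of_norm_eq_one hx
  obtain rfl : y = -x := by linear_combination hxy
  have hp : p = x ^ 2 * conj p := by
    unfold HypLineEq at h; linear_combination h / 2
  have hreal : conj (p / x) = p / x := by
    rw [map_div₀, ← inv_eq_conj hx]
    field_simp
    linear_combination -hp
  have hpx : p = (p / x).re * x := by
    rw [conj_eq_iff_re.1 hreal, div_mul_cancel₀ _ hx0]
  have h0 : (0 : ℂ) = (0 : ℝ) * x := by simp
  have h1 : x = (1 : ℝ) * x := by simp
  have h2 : -x = (-1 : ℝ) * x := by simp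
  refine Or.inl ⟨?_, ?_⟩ <;> refine collinear_of_forall_mem_exists_eq_smul x ?_ <;>
    simp only [Set.mem_insert_iff, Set.mem_singleton_iff, forall_eq_or_imp, forall_eq]
  exacts [⟨⟨_, h0⟩, ⟨_, h1⟩, ⟨_, h2⟩⟩, ⟨⟨_, h1⟩, ⟨_, h2⟩, ⟨_, hpx⟩⟩]

lemma onHypLine_of_add_ne_zero (hx : ‖x‖ = 1) (hy : ‖y‖ = 1) (hxy : x ≠ y)
    (hs : x + y ≠ 0) (h : HypLineEq x y p) : onHypLine x y p := by
  have hx0 := ne_zero_of_norm_eq_one hx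
  have hy0 := ne_zero_of_norm_eq_one hy
  set z := 2 * x * y / (x + y) with hz
  set ρ : ℂ := 4 * x * y / (x + y) ^ 2 - 1 with hρ
  have hcz : conj z = 2 / (x + y) := by
    rw [hz, map_div₀, map_add, map_mul, map_mul, ← inv_eq_conj hx, ← inv_eq_conj hy, map_ofNat]
    field_simp
    rw [add_comm y x, div_self hs]
  have hxz : (x - z) * conj (x - z) = ρ := by
    rw [map_sub, hcz, ← inv_eq_conj hx, hz, hρ]
    field_simp
    ring
  have hyz : (y - z) * conj (y - z) = ρ := by
    rw [map_sub, hcz, ← inv_eq_conj hy, hz, hρ]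
    field_simp
    ring
  have hp : (p - z) * conj (p - z) = ρ := by
    unfold HypLineEq at h
    rw [map_sub, hcz, hz, hρ]
    field_simp
    linear_combination (-(x + y)) * h
  have hz2 : z * conj z = 1 + ρ := by
    rw [hcz, hz, hρ]; field_simp; ring
  have norm_eq {u v : ℂ} (huv : u * conj u = v * conj v) : ‖u‖ = ‖v‖ := by
    rw [mul_conj', mul_conj'] at huv
    exact (sq_eq_sq₀ (norm_nonneg _) (norm_nonneg _)).1 (by exact_mod_cast huv)
  refine Or.inr ⟨z, ‖x - z‖, norm_pos_iff.2 fun hxz => hxy ?_, rfl,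
    norm_eq (hyz.trans hxz.symm), norm_eq (hp.trans hxz.symm), ?_⟩
  · rw [sub_eq_zero, hz, eq_div_iff hs] at hxz
    exact mul_left_cancel₀ hx0 (by linear_combination hxz)
  · have := hz2.trans (congrArg (1 + ·) hxz.symm)
    rw [mul_conj', mul_conj'] at this
    exact_mod_cast this

lemma onHypLine (hx : ‖x‖ = 1) (hy : ‖y‖ = 1) (hxy : x ≠ y) (h : HypLineEq x y p) :
    onHypLine x y p := by
  rcases eq_or_ne (x + y) 0 with hs | hs
  exacts [h.onHypLine_of_add_eq_zero hx hs, h.onHypLine_of_add_ne_zero hx hy hxy hs]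

lemma eq_or_eq_of_norm_eq_one (hp : ‖p‖ = 1) (h : HypLineEq x y p) : p = x ∨ p = y := by
  have hp0 := ne_zero_of_norm_eq_one hp
  unfold HypLineEq at h
  rw [← inv_eq_conj hp, mul_inv_cancel₀ hp0] at h
  have : (p - x) * (p - y) = 0 := by
    field_simp at h
    linear_combination h / 2
  simpa [sub_eq_zero] using this

end HypLineEq

noncomputable def crossingPoint (a b c d w : ℂ) : ℂ := (a * c - b * d + w) / (a - b + c - d)

lemma crossingPoint_rotate (a b c d w : ℂ) :
    crossingPoint b c d a w = crossingPoint a b c d (-w) := by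
  rw [crossingPoint, crossingPoint, ← neg_div_neg_eq]
  ring_nf

section Crossing

variable {a b c d w : ℂ}

lemma conj_sub_add_sub (ha : ‖a‖ = 1) (hb : ‖b‖ = 1) (hc : ‖c‖ = 1) (hd : ‖d‖ = 1) :
    conj (a - b + c - d) = (b * c * d - a * c * d + a * b * d - a * b * c) / (a * b * c * d) := by
  have := ne_zero_of_norm_eq_one ha
  have := ne_zero_of_norm_eq_one hb
  have := ne_zero_of_norm_eq_one hc
  have := ne_zero_of_norm_eq_one hd
  simp only [map_sub, map_add, ← inv_eq_conj ha, ← inv_eq_conj hb, ← inv_eq_conj hc,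
    ← inv_eq_conj hd]
  field_simp

lemma conj_sub_add_sub_numerator_ne_zero
    (ha : ‖a‖ = 1) (hb : ‖b‖ = 1) (hc : ‖c‖ = 1) (hd : ‖d‖ = 1)
    (hden : a - b + c - d ≠ 0) : b * c * d - a * c * d + a * b * d - a * b * c ≠ 0 := by
  have := (map_ne_zero (starRingEnd ℂ)).2 hden
  rw [conj_sub_add_sub ha hb hc hd] at this
  exact (div_ne_zero_iff.1 this).1

lemma conj_crossingPoint (ha : ‖a‖ = 1) (hb : ‖b‖ = 1) (hc : ‖c‖ = 1) (hd : ‖d‖ = 1)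
    (hcw : conj w = -w / (a * b * c * d)) :
    conj (crossingPoint a b c d w) =
      (b * d - a * c - w) / (b * c * d - a * c * d + a * b * d - a * b * c) := by
  have := ne_zero_of_norm_eq_one ha
  have := ne_zero_of_norm_eq_one hb
  have := ne_zero_of_norm_eq_one hc
  have := ne_zero_of_norm_eq_one hd
  have hnum : conj (a * c - b * d + w) = (b * d - a * c - w) / (a * b * c * d) := by
    simp only [map_sub, map_add, map_mul, hcw, ← inv_eq_conj ha, ← inv_eq_conj hb,
      ← inv_eq_conj hc, ← inv_eq_conj hd]
    field_simp
    ring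
  rw [crossingPoint, map_div₀, hnum, conj_sub_add_sub ha hb hc hd,
    div_div_div_cancel_right₀ (by simp [*])]

lemma hypLineEq_crossingPoint_ac (ha : ‖a‖ = 1) (hb : ‖b‖ = 1) (hc : ‖c‖ = 1) (hd : ‖d‖ = 1)
    (hden : a - b + c - d ≠ 0) (hw : w ^ 2 = (a - b) * (b - c) * (c - d) * (d - a))
    (hcw : conj w = -w / (a * b * c * d)) :
    HypLineEq a c (crossingPoint a b c d w) := by
  set p := crossingPoint a b c d w
  set D := a - b + c - d
  set D' := b * c * d - a * c * d + a * b * d - a * b * c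
  have hden' : D' ≠ 0 := conj_sub_add_sub_numerator_ne_zero ha hb hc hd hden
  have hp : p * D = a * c - b * d + w := div_mul_cancel₀ _ hden
  have hq : conj p * D' = b * d - a * c - w := by
    rw [conj_crossingPoint ha hb hc hd hcw]; exact div_mul_cancel₀ _ hden'
  refine mul_left_cancel₀ (mul_ne_zero hden hden') ?_
  linear_combination (2 * D' - (a + c) * conj p * D') * hp +
    (2 * a * c * D - (a + c) * (a * c - b * d + w)) * hq + (a + c) * hw

lemma hypLineEq_crossingPoint_bd (ha : ‖a‖ = 1) (hb : ‖b‖ = 1) (hc : ‖c‖ = 1) (hd : ‖d‖ = 1)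
    (hden : a - b + c - d ≠ 0) (hw : w ^ 2 = (a - b) * (b - c) * (c - d) * (d - a))
    (hcw : conj w = -w / (a * b * c * d)) :
    HypLineEq b d (crossingPoint a b c d w) := by
  rw [← neg_neg w, ← crossingPoint_rotate]
  refine hypLineEq_crossingPoint_ac hb hc hd ha (fun h => hden ?_) ?_ ?_
  · linear_combination -h
  · rw [neg_sq, hw]; ring
  · rw [map_neg, hcw]; ring

lemma norm_ne_one_of_hypLineEq {p : ℂ} (hab : a ≠ b) (hbc : b ≠ c) (hcd : c ≠ d) (hda : d ≠ a)
    (hac : HypLineEq a c p) (hbd : HypLineEq b d p) : ‖p‖ ≠ 1 := by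
  intro hp
  rcases hac.eq_or_eq_of_norm_eq_one hp with rfl | rfl <;>
    rcases hbd.eq_or_eq_of_norm_eq_one hp with h | h
  exacts [hab h, hda h.symm, hbc h.symm, hcd h]

lemma crossingPoint_mul_conj_neg (ha : ‖a‖ = 1) (hb : ‖b‖ = 1) (hc : ‖c‖ = 1) (hd : ‖d‖ = 1)
    (hden : a - b + c - d ≠ 0) (hw : w ^ 2 = (a - b) * (b - c) * (c - d) * (d - a))
    (hcw : conj w = -w / (a * b * c * d)) :
    crossingPoint a b c d w * conj (crossingPoint a b c d (-w)) = 1 := by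
  have hden' := conj_sub_add_sub_numerator_ne_zero ha hb hc hd hden
  rw [conj_crossingPoint ha hb hc hd (by rw [map_neg, hcw]; ring), crossingPoint,
    div_mul_div_comm, div_eq_one_iff_eq (mul_ne_zero hden hden')]
  linear_combination hw

lemma crossingPoint_spec (ha : ‖a‖ = 1) (hb : ‖b‖ = 1) (hc : ‖c‖ = 1) (hd : ‖d‖ = 1)
    (hab : a ≠ b) (hbc : b ≠ c) (hcd : c ≠ d) (hda : d ≠ a) (hac : a ≠ c) (hbd : b ≠ d)
    (hden : a - b + c - d ≠ 0) (hw : w ^ 2 = (a - b) * (b - c) * (c - d) * (d - a))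
    (hcw : conj w = -w / (a * b * c * d)) :
    onHypLine a c (crossingPoint a b c d w) ∧ onHypLine b d (crossingPoint a b c d w) ∧
      ‖crossingPoint a b c d w‖ ≠ 1 := by
  have h₁ := hypLineEq_crossingPoint_ac ha hb hc hd hden hw hcw
  have h₂ := hypLineEq_crossingPoint_bd ha hb hc hd hden hw hcw
  exact ⟨h₁.onHypLine ha hc hac, h₂.onHypLine hb hd hbd,
    norm_ne_one_of_hypLineEq hab hbc hcd hda h₁ h₂⟩

end Crossing

/-- For four distinct points `a, b, c, d` on the unit circle in positive order,
the point `w₄ = ((ac - bd) ± √((a-b)(b-c)(c-d)(d-a)))/(a - b + c - d)`, with the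
sign chosen so that `|w₄| < 1`, is the intersection of the hyperbolic lines
`J*[a,c]` and `J*[b,d]`. -/
theorem stmt19 (t₁ t₂ t₃ t₄ : ℝ) (a b c d : ℂ)
    (hA : a = Complex.exp (t₁ * Complex.I))
    (hB : b = Complex.exp (t₂ * Complex.I))
    (hC : c = Complex.exp (t₃ * Complex.I))
    (hD : d = Complex.exp (t₄ * Complex.I))
    (h12 : t₁ < t₂) (h23 : t₂ < t₃) (h34 : t₃ < t₄) (h41 : t₄ < t₁ + 2 * Real.pi)
    (hden : a - b + c - d ≠ 0)
    (w : ℂ) (hw : w ^ 2 = (a - b) * (b - c) * (c - d) * (d - a)) :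
    ∃ ε : ℂ, (ε = 1 ∨ ε = -1) ∧
      ‖(a * c - b * d + ε * w) / (a - b + c - d)‖ < 1 ∧
      onHypLine a c ((a * c - b * d + ε * w) / (a - b + c - d)) ∧
      onHypLine b d ((a * c - b * d + ε * w) / (a - b + c - d)) := by
  have ha : ‖a‖ = 1 := hA ▸ norm_exp_ofReal_mul_I t₁
  have hb : ‖b‖ = 1 := hB ▸ norm_exp_ofReal_mul_I t₂
  have hc : ‖c‖ = 1 := hC ▸ norm_exp_ofReal_mul_I t₃
  have hd : ‖d‖ = 1 := hD ▸ norm_exp_ofReal_mul_I t₄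
  have hab : a ≠ b := hA ▸ hB ▸ exp_mul_I_ne_exp_mul_I h12 (by linarith)
  have hbc : b ≠ c := hB ▸ hC ▸ exp_mul_I_ne_exp_mul_I h23 (by linarith)
  have hcd : c ≠ d := hC ▸ hD ▸ exp_mul_I_ne_exp_mul_I h34 (by linarith)
  have hda : d ≠ a := (hA ▸ hD ▸ exp_mul_I_ne_exp_mul_I (by linarith) h41).symm
  have hac : a ≠ c := hA ▸ hC ▸ exp_mul_I_ne_exp_mul_I (by linarith) (by linarith)
  have hbd : b ≠ d := hB ▸ hD ▸ exp_mul_I_ne_exp_mul_I (by linarith) (by linarith)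
  obtain ⟨r, hr, hprod⟩ := exists_neg_prod_sub_eq_mul h12 h23 h34 h41
  rw [← hA, ← hB, ← hC, ← hD] at hprod
  have hcw : conj w = -w / (a * b * c * d) :=
    conj_eq_neg_div_of_sq_eq_mul (by simp [ha, hb, hc, hd]) hr.le (hw.trans hprod)
  obtain ⟨hacP, hbdP, hneP⟩ := crossingPoint_spec ha hb hc hd hab hbc hcd hda hac hbd hden hw hcw
  obtain ⟨hacM, hbdM, -⟩ := crossingPoint_spec ha hb hc hd hab hbc hcd hda hac hbd hden
    (by rw [neg_sq, hw]) (by rw [map_neg, hcw]; ring)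
  have hinv : ‖crossingPoint a b c d w‖ * ‖crossingPoint a b c d (-w)‖ = 1 := by
    simpa using congrArg norm (crossingPoint_mul_conj_neg ha hb hc hd hden hw hcw)
  rcases hneP.lt_or_gt with hlt | hgt
  · exact ⟨1, Or.inl rfl, by simpa only [one_mul] using ⟨hlt, hacP, hbdP⟩⟩
  · have hlt : ‖crossingPoint a b c d (-w)‖ < 1 := by
      nlinarith [norm_nonneg (crossingPoint a b c d (-w))]
    exact ⟨-1, Or.inr rfl, by simpa only [neg_one_mul] using ⟨hlt, hacM, hbdM⟩⟩
end
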